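/- For all t > 0, the function φ(t) = 1 + t·ln(t/(1+t)) satisfies φ(t) ≥ (1 - ln 2) · min{1, 1/t}. -/

import Mathlib

/-!
As `φ 1 = 1 - log 2`, the bound reads `φ 1 ≤ φ t` for `t ≤ 1` and `φ 1 ≤ t φ t` for `t ≥ 1`.
Both follow from monotonicity on `(0, ∞)`: `φ` is antitone by concavity of `log`, and `t φ t`
is monotone because its derivative `1 + 2 t log v + v` (with `v = t / (1 + t)`) is nonnegative
by `sinh (log v) ≤ log v`.
-/

open Real Set

noncomputable def phi (t : ℝ) : ℝ := 1 + t * log (t / (1 + t))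

lemma phi_one : phi 1 = 1 - log 2 := by
  norm_num [phi]
  rw [one_div, log_inv]
  ring

lemma sub_inv_div_two_le_log {x : ℝ} (hx₀ : 0 < x) (hx₁ : x ≤ 1) :
    (x - x⁻¹) / 2 ≤ log x := by
  rw [← sinh_log hx₀]
  exact sinh_le_self_iff.2 (log_nonpos hx₀.le hx₁)

lemma antitoneOn_phi : AntitoneOn phi (Ioi 0) := by
  intro s (hs : 0 < s) t (ht : 0 < t) hst
  suffices s * log ((1 + s) / s) ≤ t * log ((1 + t) / t) by
    rw [phi, phi, ← inv_div (1 + s) s, ← inv_div (1 + t) t, log_inv, log_inv]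
    linarith
  -- `(1 + t) / t` is the combination of `(1 + s) / s` and `1` with weights `s / t`, `1 - s / t`.
  have hconc := strictConcaveOn_log_Ioi.concaveOn.2 (x := (1 + s) / s) (y := 1)
    (by positivity : (0 : ℝ) < (1 + s) / s) (mem_Ioi.2 one_pos)
    (by positivity : 0 ≤ s / t) (sub_nonneg.2 ((div_le_one ht).2 hst)) (by ring)
  have hcomb : s / t * ((1 + s) / s) + (1 - s / t) * 1 = (1 + t) / t := by
    field_simp
    ring
  simp only [smul_eq_mul, log_one, mul_zero, add_zero, hcomb] at hconc
  calc s * log ((1 + s) / s) = t * (s / t * log ((1 + s) / s)) := by field_simp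
    _ ≤ t * log ((1 + t) / t) := by gcongr

lemma hasDerivAt_mul_phi {t : ℝ} (ht : 0 < t) :
    HasDerivAt (fun s ↦ s * phi s) (1 + 2 * t * log (t / (1 + t)) + t / (1 + t)) t := by
  have h1t : 1 + t ≠ 0 := by positivity
  have hv : HasDerivAt (fun s ↦ s / (1 + s)) ((1 * (1 + t) - t * 1) / (1 + t) ^ 2) t :=
    (hasDerivAt_id' t).div ((hasDerivAt_id' t).const_add 1) h1t
  have hphi := ((hasDerivAt_id' t).mul (hv.log (div_ne_zero ht.ne' h1t))).const_add 1
  refine ((hasDerivAt_id' t).mul hphi).congr_deriv ?_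
  simp only [Pi.mul_apply]
  field_simp
  ring

lemma monotoneOn_mul_phi : MonotoneOn (fun t ↦ t * phi t) (Ioi 0) := by
  refine monotoneOn_of_hasDerivWithinAt_nonneg (convex_Ioi 0)
    (fun t ht ↦ (hasDerivAt_mul_phi ht).continuousAt.continuousWithinAt)
    (fun t ht ↦ (hasDerivAt_mul_phi (interior_subset ht)).hasDerivWithinAt) fun t ht ↦ ?_
  have ht : 0 < t := interior_subset ht
  have hv₀ : 0 < t / (1 + t) := by positivity
  have hv₁ : t / (1 + t) ≤ 1 := (div_le_one (by positivity)).2 (by linarith)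
  have hlog :=
    mul_le_mul_of_nonneg_left (sub_inv_div_two_le_log hv₀ hv₁) (by positivity : 0 ≤ 2 * t)
  have hsinh : 2 * t * ((t / (1 + t) - (t / (1 + t))⁻¹) / 2) = -(1 + t / (1 + t)) := by
    field_simp
    ring
  linarith

theorem phi_min_bound (t : ℝ) (ht : 0 < t) :
    (1 - Real.log 2) * min 1 (1 / t) ≤ 1 + t * Real.log (t / (1 + t)) := by
  change _ ≤ phi t
  rw [← phi_one]
  rcases le_total t 1 with h | h
  · rw [min_eq_left ((one_le_div ht).2 h), mul_one]
    exact antitoneOn_phi ht (mem_Ioi.2 one_pos) h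
  · rw [min_eq_right ((div_le_one ht).2 h), mul_one_div, div_le_iff₀ ht, mul_comm,
      ← one_mul (phi 1)]
    exact monotoneOn_mul_phi (mem_Ioi.2 one_pos) ht h
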